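/- If Q ∈ S^d_{>0} with λ(Q) = 1 and Q^{-1} does not lie in the Voronoi domain V(Q) = cone{xxᵀ : x ∈ Min Q}, then Q is not a local minimum of det on the Ryshkov polyhedron R = {Q' ∈ S^d_{>0} : λ(Q') ≥ 1}: in every neighborhood of Q there is Q' ∈ R with det Q' < det Q. -/

import Mathlib

/-!
Let `V` be the cone spanned by the rank-one forms `x xᵀ`, `x ∈ Min Q`. All these generators satisfy
`tr (Q x xᵀ) = xᵀ Q x = 1`, so a positive multiple of `Q⁻¹ ∉ V` lies outside their compact convex
hull, and separating it yields a symmetric `N` with `xᵀ N x > 0` on `Min Q` and `tr (Q⁻¹ N) < 0`.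
Along `Q + t N`, `t → 0⁺`, the determinant decreases since
`det (Q + t N) = det Q (1 + t tr (Q⁻¹ N) + O(t²))`, the minimal vectors keep value `≥ 1`, and,
as only finitely many lattice vectors have `xᵀ Q x ≤ 2`, so do all other nonzero lattice vectors
for small `t`.
-/

open Matrix

/-- The quadratic form value `xᵀ Q x`. -/
noncomputable def qf {d : ℕ} (Q : Matrix (Fin d) (Fin d) ℝ) (x : Fin d → ℝ) : ℝ :=
  x ⬝ᵥ Q.mulVec x

/-- Coordinatewise cast of an integer vector to a real vector. -/
noncomputable def intCast {d : ℕ} (x : Fin d → ℤ) : Fin d → ℝ := fun i => (x i : ℝ)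

/-- The arithmetical minimum `λ(Q) = inf_{x ∈ ℤ^d \ {0}} xᵀQx`. -/
noncomputable def arithMin {d : ℕ} (Q : Matrix (Fin d) (Fin d) ℝ) : ℝ :=
  sInf {r : ℝ | ∃ x : Fin d → ℤ, x ≠ 0 ∧ r = qf Q (intCast x)}

/-- The set of minimal vectors `Min Q`. -/
def minVecs {d : ℕ} (Q : Matrix (Fin d) (Fin d) ℝ) : Set (Fin d → ℤ) :=
  {x | x ≠ 0 ∧ qf Q (intCast x) = arithMin Q}

open Filter Topology

section ConeSeparation

variable {E : Type*} [AddCommGroup E] [Module ℝ E] [TopologicalSpace E] [IsTopologicalAddGroup E]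
  [ContinuousSMul ℝ E] [LocallyConvexSpace ℝ E] [T2Space E]

/-- Since `φ = 1` on `S`, the cone condition reduces to `(φ b)⁻¹ • b` lying outside the convex hull
of `S`, which is compact; so Hahn–Banach applies without knowing that the cone is closed. -/
theorem exists_strongDual_pos_of_notMem_hull {S : Set E} (hS : S.Finite) (φ : StrongDual ℝ E)
    (hφ : ∀ y ∈ S, φ y = 1) {b : E} (hb : 0 < φ b) (hbS : b ∉ PointedCone.hull ℝ S) :
    ∃ f : StrongDual ℝ E, (∀ y ∈ S, 0 < f y) ∧ f b < 0 := by
  set b' := (φ b)⁻¹ • b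
  have hb' : b' ∉ convexHull ℝ S := by
    intro h
    have hmem : b' ∈ PointedCone.hull ℝ S :=
      convexHull_min PointedCone.subset_hull (PointedCone.hull ℝ S).convex h
    exact hbS (((PointedCone.hull ℝ S).smul_mem_iff (inv_pos.2 hb)).1 hmem)
  obtain ⟨f, u, hfb, hfS⟩ := geometric_hahn_banach_point_closed (convex_convexHull ℝ S)
    (hS.isCompact_convexHull ℝ).isClosed hb'
  have hfb' : f b = φ b * f b' := by simp [b', hb.ne']
  refine ⟨f - u • φ, fun y hy => ?_, ?_⟩
  · simp only [_root_.sub_apply, _root_.smul_apply, smul_eq_mul, hφ y hy, mul_one, sub_pos]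
    exact hfS y (subset_convexHull ℝ S hy)
  · simp only [_root_.sub_apply, _root_.smul_apply, smul_eq_mul, hfb']
    nlinarith

end ConeSeparation

theorem PointedCone.exists_eq_sum_of_mem_hull_image {ι E : Type*} [AddCommGroup E] [Module ℝ E]
    {g : ι → E} {s : Finset ι} {b : E} (hb : b ∈ PointedCone.hull ℝ (g '' s)) :
    ∃ α : ι → ℝ, (∀ i, 0 ≤ α i) ∧ b = ∑ i ∈ s, α i • g i := by
  obtain ⟨l, hl, rfl⟩ := (Finsupp.mem_span_image_iff_linearCombination _).1 hb
  refine ⟨fun i => l i, fun i => (l i).2, ?_⟩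
  rw [Finsupp.linearCombination_apply, Finsupp.sum_of_support_subset l hl _ (by simp)]
  simp [Nonneg.coe_smul]

instance Matrix.instLocallyConvexSpace {m n : Type*} [Fintype m] [Fintype n] :
    LocallyConvexSpace ℝ (Matrix m n ℝ) :=
  inferInstanceAs (LocallyConvexSpace ℝ (m → n → ℝ))

theorem Matrix.exists_eq_trace_mul {m n R : Type*} [Fintype m] [Fintype n] [CommSemiring R]
    (f : Matrix m n R →ₗ[R] R) : ∃ Y : Matrix n m R, ∀ A, f A = trace (A * Y) := by
  classical
  refine ⟨of fun j i => f (single i j 1), fun A => ?_⟩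
  have hsingle : ∀ i j, single i j (A i j) = A i j • single i j (1 : R) := fun i j => by
    rw [smul_single, smul_eq_mul, mul_one]
  conv_lhs => rw [matrix_eq_sum_single A]
  simp only [map_sum, hsingle, map_smul, smul_eq_mul, trace, diag_apply, mul_apply, of_apply]

theorem Matrix.trace_mul_add_transpose {n R : Type*} [Fintype n] [CommSemiring R]
    {A : Matrix n n R} (hA : A.IsSymm) (Y : Matrix n n R) :
    trace (A * (Y + Yᵀ)) = 2 * trace (A * Y) := by
  rw [mul_add, trace_add, two_mul, ← trace_transpose (A * Yᵀ), transpose_mul, transpose_transpose,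
    hA.eq, trace_mul_comm]

section Det

open Polynomial

variable {n : Type*} [Fintype n] [DecidableEq n]

theorem Matrix.eventually_det_one_add_smul_lt_one {M : Matrix n n ℝ} (hM : trace M < 0) :
    ∀ᶠ t in 𝓝[>] (0 : ℝ), det (1 + t • M) < 1 := by
  set p := (det (1 + (X : ℝ[X]) • M.map C)).divX.divX
  have hlim : Tendsto (fun t => trace M + p.eval t * t) (𝓝 0) (𝓝 (trace M)) :=
    Continuous.tendsto' (by fun_prop) 0 _ (by simp)
  filter_upwards [self_mem_nhdsWithin, nhdsWithin_le_nhds (hlim.eventually_lt_const hM)]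
    with t (ht : 0 < t) hneg
  rw [det_one_add_smul]
  nlinarith [mul_neg_of_pos_of_neg ht hneg]

theorem Matrix.eventually_det_add_smul_lt {Q N : Matrix n n ℝ} (hQ : 0 < det Q)
    (hN : trace (Q⁻¹ * N) < 0) : ∀ᶠ t in 𝓝[>] (0 : ℝ), det (Q + t • N) < det Q := by
  filter_upwards [eventually_det_one_add_smul_lt_one hN] with t ht
  have hfactor : Q + t • N = Q * (1 + t • (Q⁻¹ * N)) := by
    rw [mul_add, mul_one, Matrix.mul_smul, mul_nonsing_inv_cancel_left _ _ hQ.ne'.isUnit]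
  rw [hfactor, det_mul]
  exact mul_lt_of_lt_one_right hQ ht

end Det

section QuadraticForm

variable {d : ℕ}

theorem qf_add_smul (Q N : Matrix (Fin d) (Fin d) ℝ) (t : ℝ) (v : Fin d → ℝ) :
    qf (Q + t • N) v = qf Q v + t * qf N v := by
  simp [qf, add_mulVec, smul_mulVec, dotProduct_add]

theorem qf_smul_right (A : Matrix (Fin d) (Fin d) ℝ) (c : ℝ) (v : Fin d → ℝ) :
    qf A (c • v) = c ^ 2 * qf A v := by
  simp only [qf, mulVec_smul, dotProduct_smul, smul_dotProduct, smul_eq_mul]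
  ring

theorem continuous_qf (A : Matrix (Fin d) (Fin d) ℝ) : Continuous (qf A) :=
  continuous_id.dotProduct (continuous_const.matrix_mulVec continuous_id)

theorem Matrix.PosDef.qf_pos {Q : Matrix (Fin d) (Fin d) ℝ} (hQ : Q.PosDef) {v : Fin d → ℝ}
    (hv : v ≠ 0) : 0 < qf Q v := by
  simpa [qf] using hQ.dotProduct_mulVec_pos hv

theorem Matrix.PosSemidef.qf_nonneg {Q : Matrix (Fin d) (Fin d) ℝ} (hQ : Q.PosSemidef)
    (v : Fin d → ℝ) : 0 ≤ qf Q v := by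
  simpa [qf] using hQ.dotProduct_mulVec_nonneg v

theorem trace_vecMulVec_self_mul (v : Fin d → ℝ) (N : Matrix (Fin d) (Fin d) ℝ) :
    trace (vecMulVec v v * N) = qf N v := by
  rw [vecMulVec_mul, trace_vecMulVec, qf, dotProduct_comm, dotProduct_mulVec]

theorem exists_isHermitian_qf_pos_trace_mul_neg {ι : Type*}
    {Q B : Matrix (Fin d) (Fin d) ℝ} (hB : B.IsSymm) (hBQ : 0 < trace (B * Q))
    (s : Finset ι) (v : ι → Fin d → ℝ) (hQv : ∀ i ∈ s, qf Q (v i) = 1)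
    (hBs : ¬ ∃ α : ι → ℝ, (∀ i, 0 ≤ α i) ∧ B = ∑ i ∈ s, α i • vecMulVec (v i) (v i)) :
    ∃ N : Matrix (Fin d) (Fin d) ℝ, N.IsHermitian ∧ (∀ i ∈ s, 0 < qf N (v i)) ∧
      trace (B * N) < 0 := by
  let φ : StrongDual ℝ (Matrix (Fin d) (Fin d) ℝ) := LinearMap.toContinuousLinearMap
    (traceLinearMap (Fin d) ℝ ℝ ∘ₗ LinearMap.mulRight ℝ Q)
  obtain ⟨f, hf_pos, hf_neg⟩ := exists_strongDual_pos_of_notMem_hull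
    (s.finite_toSet.image fun i => vecMulVec (v i) (v i)) φ
    (by rintro _ ⟨i, hi, rfl⟩; simpa [φ, trace_vecMulVec_self_mul] using hQv i hi) hBQ
    (fun h => hBs (PointedCone.exists_eq_sum_of_mem_hull_image h))
  obtain ⟨Y, hY⟩ := exists_eq_trace_mul (f : Matrix (Fin d) (Fin d) ℝ →ₗ[ℝ] ℝ)
  refine ⟨Y + Yᵀ, isHermitian_iff_isSymm.2 (isSymm_add_transpose_self Y), fun i hi => ?_, ?_⟩
  · rw [← trace_vecMulVec_self_mul, trace_mul_add_transpose (transpose_vecMulVec _ _), ← hY]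
    exact mul_pos two_pos (hf_pos _ ⟨i, hi, rfl⟩)
  · rw [trace_mul_add_transpose hB, ← hY]
    exact mul_neg_of_pos_of_neg two_pos hf_neg

/-- Both sides are homogeneous of degree two, so the bound on the unit sphere, which is compact,
extends to all vectors. -/
theorem Matrix.PosDef.exists_abs_qf_le_mul_qf {Q : Matrix (Fin d) (Fin d) ℝ} (hQ : Q.PosDef)
    (N : Matrix (Fin d) (Fin d) ℝ) : ∃ C, 0 ≤ C ∧ ∀ v, |qf N v| ≤ C * qf Q v := by
  have hcont : ContinuousOn (fun u => |qf N u| / qf Q u) (Metric.sphere 0 1) :=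
    (continuous_qf N).abs.continuousOn.div (continuous_qf Q).continuousOn
      fun u hu => (hQ.qf_pos (ne_zero_of_mem_unit_sphere ⟨u, hu⟩)).ne'
  obtain ⟨C, hC⟩ := (isCompact_sphere 0 1).exists_bound_of_continuousOn hcont
  refine ⟨max C 0, le_max_right _ _, fun v => ?_⟩
  rcases eq_or_ne v 0 with rfl | hv
  · simp [qf]
  have hnorm : 0 < ‖v‖ := norm_pos_iff.2 hv
  have hu : ‖v‖⁻¹ • v ∈ Metric.sphere (0 : Fin d → ℝ) 1 := by
    simp [norm_smul, hnorm.ne']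
  have hbound : |qf N (‖v‖⁻¹ • v)| / qf Q (‖v‖⁻¹ • v) ≤ max C 0 :=
    (le_abs_self _).trans ((hC _ hu).trans (le_max_left C 0))
  rw [div_le_iff₀ (hQ.qf_pos (by simpa using hnorm.ne')), qf_smul_right, qf_smul_right,
    abs_mul, abs_of_pos (by positivity), mul_left_comm] at hbound
  exact le_of_mul_le_mul_left hbound (by positivity)

theorem one_sub_mul_qf_le_qf_add_smul {Q N : Matrix (Fin d) (Fin d) ℝ} {C : ℝ}
    (hC : ∀ v, |qf N v| ≤ C * qf Q v) (t : ℝ) (v : Fin d → ℝ) :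
    (1 - |t| * C) * qf Q v ≤ qf (Q + t • N) v := by
  have := (neg_le_abs (t * qf N v)).trans
    ((abs_mul t _).trans_le (mul_le_mul_of_nonneg_left (hC v) (abs_nonneg t)))
  rw [qf_add_smul]
  linarith

theorem Matrix.PosDef.eventually_posDef_add_smul {Q N : Matrix (Fin d) (Fin d) ℝ} (hQ : Q.PosDef)
    (hN : N.IsHermitian) : ∀ᶠ t in 𝓝 (0 : ℝ), (Q + t • N).PosDef := by
  obtain ⟨C, -, hC⟩ := hQ.exists_abs_qf_le_mul_qf N
  have hsmall : ∀ᶠ t in 𝓝 (0 : ℝ), |t| * C < 1 :=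
    (continuous_abs.mul continuous_const).continuousAt.eventually_lt continuousAt_const (by simp)
  filter_upwards [hsmall] with t ht
  refine PosDef.of_dotProduct_mulVec_pos (hQ.1.add (hN.smul (IsSelfAdjoint.all t))) fun v hv => ?_
  exact (mul_pos (sub_pos.2 ht) (hQ.qf_pos hv)).trans_le (one_sub_mul_qf_le_qf_add_smul hC t v)

theorem Matrix.PosDef.finite_setOf_qf_intCast_le {Q : Matrix (Fin d) (Fin d) ℝ} (hQ : Q.PosDef)
    (r : ℝ) : {x : Fin d → ℤ | qf Q (intCast x) ≤ r}.Finite := by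
  obtain ⟨C, hC0, hC⟩ := hQ.exists_abs_qf_le_mul_qf 1
  refine (Set.finite_Icc (fun _ => -⌈C * r⌉) fun _ => ⌈C * r⌉).subset fun x hx => ?_
  have hsq : ∀ i, x i ^ 2 ≤ ⌈C * r⌉ := fun i => by
    have : ((x i : ℝ)) ^ 2 ≤ C * r := calc
      ((x i : ℝ)) ^ 2 ≤ intCast x ⬝ᵥ intCast x :=
        (sq (x i : ℝ)).trans_le <| Finset.single_le_sum (f := fun j => intCast x j * intCast x j)
          (fun j _ => mul_self_nonneg _) (Finset.mem_univ i)
      _ ≤ |qf 1 (intCast x)| := by rw [qf, one_mulVec]; exact le_abs_self _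
      _ ≤ C * r := (hC _).trans (mul_le_mul_of_nonneg_left hx hC0)
    exact_mod_cast this.trans (Int.le_ceil _)
  exact ⟨fun i => by linarith [Int.le_self_sq (-x i), neg_sq (x i), hsq i],
    fun i => (Int.le_self_sq _).trans (hsq i)⟩

theorem arithMin_le_qf {A : Matrix (Fin d) (Fin d) ℝ} (hA : A.PosSemidef) {x : Fin d → ℤ}
    (hx : x ≠ 0) : arithMin A ≤ qf A (intCast x) :=
  csInf_le ⟨0, by rintro _ ⟨y, -, rfl⟩; exact hA.qf_nonneg _⟩ ⟨x, hx, rfl⟩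

theorem le_arithMin (hd : 0 < d) {A : Matrix (Fin d) (Fin d) ℝ} {r : ℝ}
    (h : ∀ x : Fin d → ℤ, x ≠ 0 → r ≤ qf A (intCast x)) : r ≤ arithMin A :=
  le_csInf ⟨_, Pi.single ⟨0, hd⟩ 1, by simp, rfl⟩ (by rintro _ ⟨x, hx, rfl⟩; exact h x hx)

/-- Vectors with `xᵀ Q x > 2` are handled uniformly by the bound `|xᵀ N x| ≤ C xᵀ Q x`, the finitely
many others one at a time. -/
theorem Matrix.PosDef.eventually_one_le_qf_add_smul {Q N : Matrix (Fin d) (Fin d) ℝ}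
    (hQ : Q.PosDef) (h1 : ∀ x : Fin d → ℤ, x ≠ 0 → 1 ≤ qf Q (intCast x))
    (hN : ∀ x : Fin d → ℤ, x ≠ 0 → qf Q (intCast x) = 1 → 0 ≤ qf N (intCast x)) :
    ∀ᶠ t in 𝓝[≥] (0 : ℝ), ∀ x : Fin d → ℤ, x ≠ 0 → 1 ≤ qf (Q + t • N) (intCast x) := by
  obtain ⟨C, -, hC⟩ := hQ.exists_abs_qf_le_mul_qf N
  have hsmall : ∀ᶠ t in 𝓝 (0 : ℝ), |t| * C < 1 / 2 :=
    (continuous_abs.mul continuous_const).continuousAt.eventually_lt continuousAt_const (by simp)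
  have hshort : ∀ᶠ t in 𝓝[≥] (0 : ℝ), ∀ x ∈ {x : Fin d → ℤ | qf Q (intCast x) ≤ 2},
      x ≠ 0 → 1 ≤ qf (Q + t • N) (intCast x) := by
    refine (hQ.finite_setOf_qf_intCast_le 2).eventually_all.2 fun x _ => ?_
    by_cases hx : x = 0
    · exact Eventually.of_forall fun _ h => absurd hx h
    simp only [qf_add_smul]
    rcases (h1 x hx).eq_or_lt with h | h
    · filter_upwards [self_mem_nhdsWithin] with t (ht : 0 ≤ t) _
      nlinarith [hN x hx h.symm]
    · have hlim : Tendsto (fun t : ℝ => qf Q (intCast x) + t * qf N (intCast x)) (𝓝 0)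
          (𝓝 (qf Q (intCast x))) := Continuous.tendsto' (by fun_prop) 0 _ (by simp)
      filter_upwards [(hlim.mono_left nhdsWithin_le_nhds).eventually_const_le h] with t ht _
      exact ht
  filter_upwards [hshort, nhdsWithin_le_nhds hsmall] with t hshort hsmall x hx
  by_cases hx2 : qf Q (intCast x) ≤ 2
  · exact hshort x hx2 hx
  · nlinarith [one_sub_mul_qf_le_qf_add_smul hC t (intCast x)]

end QuadraticForm

/-- If Q⁻¹ is not in the Voronoi domain, then Q is not a local minimum of det on the
Ryshkov polyhedron (the other direction of Voronoi's characterization). -/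
theorem stmt11 (d : ℕ) (hd : 0 < d) (Q : Matrix (Fin d) (Fin d) ℝ) (hQ : Q.PosDef)
    (hlam : arithMin Q = 1) (hfin : (minVecs Q).Finite)
    (hnotV : ¬ ∃ α : (Fin d → ℤ) → ℝ, (∀ x, 0 ≤ α x) ∧
      Q⁻¹ = ∑ x ∈ hfin.toFinset, α x • vecMulVec (intCast x) (intCast x)) :
    ∀ U ∈ nhds Q, ∃ Q' ∈ U, Matrix.PosDef Q' ∧ 1 ≤ arithMin Q' ∧
      Matrix.det Q' < Q.det := by
  intro U hU
  have hge : ∀ x : Fin d → ℤ, x ≠ 0 → 1 ≤ qf Q (intCast x) := fun x hx =>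
    hlam ▸ arithMin_le_qf hQ.posSemidef hx
  have hQv : ∀ x ∈ hfin.toFinset, qf Q (intCast x) = 1 := fun x hx => by
    rw [Set.Finite.mem_toFinset] at hx
    rw [hx.2, hlam]
  have htrace : 0 < trace (Q⁻¹ * Q) := by
    rw [nonsing_inv_mul _ hQ.det_pos.ne'.isUnit, trace_one, Fintype.card_fin]
    exact_mod_cast hd
  obtain ⟨N, hN, hNpos, hNtr⟩ := exists_isHermitian_qf_pos_trace_mul_neg
    (isHermitian_iff_isSymm.1 hQ.inv.isHermitian) htrace hfin.toFinset intCast hQv hnotV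
  have hNmin : ∀ x : Fin d → ℤ, x ≠ 0 → qf Q (intCast x) = 1 → 0 ≤ qf N (intCast x) :=
    fun x hx h1 => (hNpos x (hfin.mem_toFinset.2 ⟨hx, h1.trans hlam.symm⟩)).le
  have hcont : Tendsto (fun t : ℝ => Q + t • N) (𝓝 0) (𝓝 Q) :=
    Continuous.tendsto' (by fun_prop) 0 _ (by simp)
  have hperturb : ∀ᶠ t in 𝓝[>] (0 : ℝ), Q + t • N ∈ U ∧ (Q + t • N).PosDef ∧
      1 ≤ arithMin (Q + t • N) ∧ det (Q + t • N) < det Q := by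
    filter_upwards [nhdsWithin_le_nhds (hcont hU),
      nhdsWithin_le_nhds (hQ.eventually_posDef_add_smul hN),
      nhdsWithin_mono _ Set.Ioi_subset_Ici_self (hQ.eventually_one_le_qf_add_smul hge hNmin),
      eventually_det_add_smul_lt hQ.det_pos hNtr] with t htU hpos hmin hdet
    exact ⟨htU, hpos, le_arithMin hd hmin, hdet⟩
  obtain ⟨t, ht⟩ := hperturb.exists
  exact ⟨_, ht⟩
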